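/- arXiv:1706.09681 — 2 statements merged into one kernel-verified Lean document; each statement's English description precedes it below -/
import Mathlib

section
/- (Theorem 2.3, second identity) For λ ∈ ℝ, r a nonnegative integer, every nonnegative integer n, and every real x, the extended degenerate Bell polynomial satisfies Bel^{(r)}_{n,λ}(x) = Σ_{k=0}^{n} ( Σ_{m=k}^{n} Σ_{l=0}^{n−m} C(n,m) r^l λ^{n−m−l} S_1(n−m, l) S_{2,λ}(m, k) ) x^k. -/
open Finset

/-- The degenerate falling factorial `(x|λ)_n = x(x-λ)(x-2λ)⋯(x-(n-1)λ)`. -/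
noncomputable def degFall (x lam : ℝ) (n : ℕ) : ℝ := ∏ i ∈ Finset.range n, (x - i * lam)

/-- The formal power series `(1+λt)^{y/λ} = Σ_{m=0}^∞ (y|λ)_m t^m/m!`. -/
noncomputable def degExp (lam y : ℝ) : PowerSeries ℝ :=
  PowerSeries.mk fun m => degFall y lam m / m.factorial

/-- The degenerate Stirling numbers of the second kind `S_{2,λ}(n,k)`, defined by
`(1/k!)((1+λt)^{1/λ} - 1)^k = Σ_{n=k}^∞ S_{2,λ}(n,k) t^n/n!`. -/
noncomputable def degStirling2 (lam : ℝ) (n k : ℕ) : ℝ :=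
  (n.factorial : ℝ) *
    PowerSeries.coeff n (((k.factorial : ℝ))⁻¹ • (degExp lam 1 - 1) ^ k)

/-- The extended degenerate Stirling numbers of the second kind `S_{2,r}(n+r,k+r|λ)`,
defined by `(1/k!)(1+λt)^{r/λ}((1+λt)^{1/λ} - 1)^k = Σ_{n=k}^∞ S_{2,r}(n+r,k+r|λ) t^n/n!`. -/
noncomputable def extDegStirling2 (lam : ℝ) (r n k : ℕ) : ℝ :=
  (n.factorial : ℝ) *
    PowerSeries.coeff n
      (((k.factorial : ℝ))⁻¹ • (degExp lam r * (degExp lam 1 - 1) ^ k))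

/-- The exponential `e^f = Σ_{k=0}^∞ f^k / k!` of a formal power series, computed
coefficientwise (the coefficientwise sums converge when `f` has zero constant term). -/
noncomputable def expComp (f : PowerSeries ℝ) : PowerSeries ℝ :=
  PowerSeries.mk fun n => ∑' k : ℕ, PowerSeries.coeff n (f ^ k) / k.factorial

/-- The degenerate Bell polynomials, defined by
`e^{x((1+λt)^{1/λ} - 1)} = Σ_{n=0}^∞ Bel_{n,λ}(x) t^n/n!`. -/
noncomputable def degBell (lam x : ℝ) (n : ℕ) : ℝ :=
  (n.factorial : ℝ) * PowerSeries.coeff n (expComp (x • (degExp lam 1 - 1)))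

/-- The extended degenerate Bell polynomials, defined by
`(1+λt)^{r/λ} e^{x((1+λt)^{1/λ} - 1)} = Σ_{n=0}^∞ Bel^{(r)}_{n,λ}(x) t^n/n!`. -/
noncomputable def extDegBell (lam : ℝ) (r : ℕ) (x : ℝ) (n : ℕ) : ℝ :=
  (n.factorial : ℝ) *
    PowerSeries.coeff n (degExp lam r * expComp (x • (degExp lam 1 - 1)))

/-- The signed Stirling numbers of the first kind `S_1(n,k)`, defined by
`(x)_n = x(x-1)⋯(x-n+1) = Σ_{k=0}^n S_1(n,k) x^k`. -/
noncomputable def stirling1 (n k : ℕ) : ℝ :=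
  (∏ i ∈ Finset.range n, (Polynomial.X - Polynomial.C (i : ℝ))).coeff k

/-- The Stirling numbers of the second kind, defined by
`(1/k!)(e^t - 1)^k = Σ_{n=k}^∞ S_2(n,k) t^n/n!`. -/
noncomputable def stirling2 (n k : ℕ) : ℝ :=
  (n.factorial : ℝ) *
    PowerSeries.coeff n (((k.factorial : ℝ))⁻¹ • (PowerSeries.exp ℝ - 1) ^ k)

/-- The r-Stirling numbers of the second kind `S_{2,r}(n+r,k+r)`, defined by
`e^{rt}(1/k!)(e^t - 1)^k = Σ_{n=0}^∞ S_{2,r}(n+r,k+r) t^n/n!`. -/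
noncomputable def rStirling2 (r n k : ℕ) : ℝ :=
  (n.factorial : ℝ) *
    PowerSeries.coeff n
      (PowerSeries.rescale (r : ℝ) (PowerSeries.exp ℝ) *
        ((k.factorial : ℝ))⁻¹ • (PowerSeries.exp ℝ - 1) ^ k)

/-- The ordinary falling factorial `(x)_k = x(x-1)⋯(x-k+1)`. -/
noncomputable def fallFact (x : ℝ) (k : ℕ) : ℝ := ∏ i ∈ Finset.range k, (x - i)

/-! The generating function of `Bel^{(r)}_{n,λ}` is the product of `(1+λt)^{r/λ}` and the
generating function of the degenerate Bell polynomials, so `Bel^{(r)}_{n,λ}(x)` is the binomial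
convolution of `(r|λ)_{n-m}` with `Bel_{m,λ}(x) = Σ_k S_{2,λ}(m,k) x^k`. It remains to expand
`(r|λ)_j = λ^j (r/λ)_j = Σ_l S_1(j,l) r^l λ^{j-l}`; stated as the homogenization of `(x)_j`
evaluated at `(r, λ)`, this needs no case distinction on `λ = 0`. -/

lemma Polynomial.eval_homogenize_eq_sum {R : Type*} [CommSemiring R] (p : Polynomial R) (n : ℕ)
    (x : Fin 2 → R) :
    MvPolynomial.eval x (p.homogenize n) =
      ∑ kl ∈ antidiagonal n, p.coeff kl.1 * x 0 ^ kl.1 * x 1 ^ kl.2 := by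
  simp only [Polynomial.homogenize, MvPolynomial.eval_sum, MvPolynomial.eval_monomial]
  refine Finset.sum_congr rfl fun kl _ => ?_
  rw [Finsupp.update_eq_add_single, Finsupp.prod_add_index', Finsupp.prod_single_index,
    Finsupp.prod_single_index]
  · ring
  all_goals simp [pow_add]

open Polynomial in
theorem degFall_eq_sum_stirling1 (y lam : ℝ) (j : ℕ) :
    degFall y lam j = ∑ l ∈ range (j + 1), stirling1 j l * y ^ l * lam ^ (j - l) := by
  have hom := homogenize_finsetProd (s := range j) (n := fun _ => 1)
    (p := fun i => X - C (i : ℝ)) fun i _ => (natDegree_X_sub_C _).le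
  simp only [sum_const, card_range, smul_eq_mul, mul_one] at hom
  calc degFall y lam j
      = MvPolynomial.eval ![y, lam] ((∏ i ∈ range j, (X - C (i : ℝ))).homogenize j) := by
        rw [hom, map_prod]
        refine prod_congr rfl fun i _ => ?_
        rw [homogenize_sub, homogenize_X one_ne_zero, homogenize_C]
        simp [mul_comm]
    _ = _ := by
        rw [eval_homogenize_eq_sum, Nat.sum_antidiagonal_eq_sum_range_succ_mk]
        rfl

namespace PowerSeries

variable {R : Type*}

theorem coeff_pow_eq_zero_of_lt [CommSemiring R] {f : PowerSeries R}
    (hf : constantCoeff f = 0) {m k : ℕ} (h : m < k) : coeff m (f ^ k) = 0 :=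
  coeff_of_lt_order _ ((Nat.cast_lt.2 h).trans_le (le_order_pow_of_constantCoeff_eq_zero k hf))

theorem factorial_mul_coeff_mul [CommSemiring R] (f g : PowerSeries R) (n : ℕ) :
    (n.factorial : R) * coeff n (f * g) =
      ∑ m ∈ range (n + 1), (n.choose m : R) *
        ((n - m).factorial * coeff (n - m) f) * (m.factorial * coeff m g) := by
  rw [mul_comm f, coeff_mul,
    Nat.sum_antidiagonal_eq_sum_range_succ (fun i j => coeff i g * coeff j f), mul_sum]
  refine sum_congr rfl fun m hm => ?_
  rw [← Nat.choose_mul_factorial_mul_factorial (Nat.lt_succ_iff.mp (mem_range.mp hm))]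
  push_cast
  ring

end PowerSeries

theorem coeff_expComp (f : PowerSeries ℝ) (hf : PowerSeries.constantCoeff f = 0) (m : ℕ) :
    PowerSeries.coeff m (expComp f) =
      ∑ k ∈ range (m + 1), PowerSeries.coeff m (f ^ k) / k.factorial := by
  rw [expComp, PowerSeries.coeff_mk]
  refine tsum_eq_sum fun k hk => ?_
  rw [PowerSeries.coeff_pow_eq_zero_of_lt hf (by simpa using hk), zero_div]

theorem constantCoeff_degExp (lam y : ℝ) : PowerSeries.constantCoeff (degExp lam y) = 1 := by
  simp [← PowerSeries.coeff_zero_eq_constantCoeff_apply, degExp, degFall]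

theorem factorial_mul_coeff_degExp (lam y : ℝ) (j : ℕ) :
    (j.factorial : ℝ) * PowerSeries.coeff j (degExp lam y) = degFall y lam j := by
  simp [degExp, mul_div_cancel₀, Nat.factorial_ne_zero]

theorem degBell_eq_sum_degStirling2 (lam x : ℝ) (m : ℕ) :
    degBell lam x m = ∑ k ∈ range (m + 1), degStirling2 lam m k * x ^ k := by
  have hE : PowerSeries.constantCoeff (x • (degExp lam 1 - 1)) = 0 := by
    simp [constantCoeff_degExp]
  rw [degBell, coeff_expComp _ hE, mul_sum]
  refine sum_congr rfl fun k _ => ?_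
  simp only [degStirling2, smul_pow, map_smul, smul_eq_mul]
  field_simp

theorem extDegBell_eq_sum_choose_degBell (lam : ℝ) (r : ℕ) (x : ℝ) (n : ℕ) :
    extDegBell lam r x n =
      ∑ m ∈ range (n + 1), (n.choose m : ℝ) * degFall r lam (n - m) * degBell lam x m := by
  simp only [extDegBell, PowerSeries.factorial_mul_coeff_mul, factorial_mul_coeff_degExp, degBell]

theorem extDegBell_eq_sum (lam : ℝ) (r : ℕ) (n : ℕ) (x : ℝ) :
    extDegBell lam r x n =
      ∑ k ∈ Finset.range (n + 1),
        (∑ m ∈ Finset.Icc k n, ∑ l ∈ Finset.range (n - m + 1),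
          (n.choose m : ℝ) * (r : ℝ) ^ l * lam ^ (n - m - l) * stirling1 (n - m) l *
            degStirling2 lam m k) * x ^ k := by
  simp only [extDegBell_eq_sum_choose_degBell, degBell_eq_sum_degStirling2,
    degFall_eq_sum_stirling1, mul_sum, sum_mul]
  rw [sum_comm' (t' := range (n + 1)) (s' := fun k => Icc k n)
    (by intro m k; simp only [mem_range, mem_Icc]; omega)]
  refine sum_congr rfl fun k _ => sum_congr rfl fun m _ => sum_congr rfl fun l _ => ?_
  ring
end

section
/- (Theorem 2.6) For λ ∈ ℝ, r a nonnegative integer, and nonnegative integers n, m, k with n ≥ m+k, one has C(m+k, m) S_{2,r}(n+r, m+k+r | λ) = Σ_{l=m}^{n−k} C(n,l) S_{2,r}(l+r, m+r | λ) S_{2,λ}(n−l, k). -/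
open Finset

/-!
With `A = (1+λt)^{r/λ}` and `B = (1+λt)^{1/λ} - 1`, the identity is the coefficient of `tⁿ/n!` in
`C(m+k, m)/(m+k)! · A Bᵐ⁺ᵏ = (A Bᵐ/m!) · (Bᵏ/k!)`, expanded as a product of exponential generating
functions. Since `B` has no constant term, `A Bᵐ/m!` and `Bᵏ/k!` have no coefficients below `tᵐ`
and `tᵏ` respectively, which cuts the binomial convolution down to `m ≤ l ≤ n - k`.
-/

open PowerSeries
open scoped Nat

theorem PowerSeries.factorial_mul_coeff_mul_s14 {R : Type*} [CommSemiring R] (f g : PowerSeries R)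
    (n : ℕ) :
    (n ! : R) * coeff n (f * g) =
      ∑ l ∈ range (n + 1),
        (n.choose l : R) * ((l ! : R) * coeff l f) * (((n - l) ! : R) * coeff (n - l) g) := by
  rw [coeff_mul, Nat.sum_antidiagonal_eq_sum_range_succ_mk, mul_sum]
  refine sum_congr rfl fun l hl => ?_
  have hfac : (n.choose l : R) * l ! * (n - l) ! = n ! := by
    exact_mod_cast congrArg (Nat.cast (R := R))
      (Nat.choose_mul_factorial_mul_factorial (Nat.lt_succ_iff.mp (mem_range.mp hl)))
  rw [← hfac]
  ring

theorem PowerSeries.coeff_mul_pow_eq_zero_of_lt {R : Type*} [CommSemiring R]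
    {f : PowerSeries R} (hf : constantCoeff f = 0) (g : PowerSeries R) {j k : ℕ} (hj : j < k) :
    coeff j (g * f ^ k) = 0 :=
  X_pow_dvd_iff.mp (dvd_mul_of_dvd_right (pow_dvd_pow_of_dvd (X_dvd_iff.mpr hf) k) g) j hj

theorem constantCoeff_degExp_sub_one (lam : ℝ) : constantCoeff (degExp lam 1 - 1) = 0 := by
  simp [degExp, degFall]

theorem extDegStirling2_eq_zero_of_lt (lam : ℝ) (r : ℕ) {n k : ℕ} (h : n < k) :
    extDegStirling2 lam r n k = 0 := by
  rw [extDegStirling2, map_smul,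
    coeff_mul_pow_eq_zero_of_lt (constantCoeff_degExp_sub_one lam) _ h, smul_zero, mul_zero]

theorem degStirling2_eq_zero_of_lt (lam : ℝ) {n k : ℕ} (h : n < k) :
    degStirling2 lam n k = 0 := by
  rw [degStirling2, map_smul, ← one_mul ((degExp lam 1 - 1) ^ k),
    coeff_mul_pow_eq_zero_of_lt (constantCoeff_degExp_sub_one lam) _ h, smul_zero, mul_zero]

theorem choose_mul_extDegStirling2_eq_general (lam : ℝ) (r n m k : ℕ) :
    ((m + k).choose m : ℝ) * extDegStirling2 lam r n (m + k) =
      ∑ l ∈ Finset.Icc m (n - k),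
        (n.choose l : ℝ) * extDegStirling2 lam r l m * degStirling2 lam (n - l) k := by
  set A := degExp lam r
  set B := degExp lam 1 - 1
  have hsplit : (((m + k).choose m : ℝ) * ((m + k) ! : ℝ)⁻¹) • (A * B ^ (m + k)) =
      ((m ! : ℝ)⁻¹ • (A * B ^ m)) * ((k ! : ℝ)⁻¹ • B ^ k) := by
    rw [Nat.cast_add_choose, smul_mul_smul_comm, pow_add, ← mul_assoc]
    congr 1
    field_simp
  calc ((m + k).choose m : ℝ) * extDegStirling2 lam r n (m + k)
      = (n ! : ℝ) * coeff n (((m ! : ℝ)⁻¹ • (A * B ^ m)) * ((k ! : ℝ)⁻¹ • B ^ k)) := by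
        rw [← hsplit, extDegStirling2, map_smul, map_smul, smul_eq_mul, smul_eq_mul]
        ring
    _ = ∑ l ∈ range (n + 1),
          (n.choose l : ℝ) * extDegStirling2 lam r l m * degStirling2 lam (n - l) k :=
        factorial_mul_coeff_mul_s14 _ _ n
    _ = _ := by
        refine (sum_subset (fun l hl => ?_) fun l hln hl => ?_).symm
        · simp only [mem_Icc, mem_range] at hl ⊢
          omega
        · simp only [mem_range, mem_Icc] at hln hl
          rcases Nat.lt_or_ge l m with hlm | hml
          · rw [extDegStirling2_eq_zero_of_lt lam r hlm, mul_zero, zero_mul]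
          · rw [degStirling2_eq_zero_of_lt lam (by omega), mul_zero]

theorem choose_mul_extDegStirling2_eq (lam : ℝ) (r n m k : ℕ) (h : m + k ≤ n) :
    ((m + k).choose m : ℝ) * extDegStirling2 lam r n (m + k) =
      ∑ l ∈ Finset.Icc m (n - k),
        (n.choose l : ℝ) * extDegStirling2 lam r l m * degStirling2 lam (n - l) k :=
  choose_mul_extDegStirling2_eq_general lam r n m k
end
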